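/- The Coombs voting method violates positive involvement: there exists a profile P, a candidate x ∈ Coombs(P), and a profile P' obtained from P by adding one new voter whose ballot ranks x in first place, such that x ∉ Coombs(P'). (A witness: P is the 6-voter profile on candidates {a,b,c,d} with ballots abdc, cadb, cadb, adbc, bcda, cbad, in which Coombs(P) = {a}; adding a voter with ballot adcb yields Coombs(P') = {c}.) -/
import Mathlib


open scoped Classical

/-- `r` is a strict linear order on the finite set `X`, relating only members of `X`. -/
def IsLinOn (X : Finset ℕ) (r : ℕ → ℕ → Prop) : Prop :=
  (∀ a b, r a b → a ∈ X ∧ b ∈ X) ∧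
  (∀ a, ¬ r a a) ∧
  (∀ a b c, r a b → r b c → r a c) ∧
  (∀ a ∈ X, ∀ b ∈ X, a ≠ b → r a b ∨ r b a)

/-- A profile assigns to each voter in a nonempty finite set of voters a strict linear
order (ballot) on a nonempty finite set of candidates.  Voters and candidates are both
drawn from the infinite set `ℕ`. -/
structure Profile where
  voters : Finset ℕ
  cands : Finset ℕ
  voters_nonempty : voters.Nonempty
  cands_nonempty : cands.Nonempty
  ballot : ℕ → ℕ → ℕ → Prop
  ballot_lin : ∀ i ∈ voters, IsLinOn cands (ballot i)

/-- `F` is a voting method: it assigns to each profile a nonempty set of winners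
among the candidates of the profile. -/
def VotingMethod (F : Profile → Finset ℕ) : Prop :=
  ∀ P : Profile, (F P).Nonempty ∧ F P ⊆ P.cands

/-- The ballot `r` ranks `x` in first place among the candidates in `X`. -/
def RanksFirst (X : Finset ℕ) (r : ℕ → ℕ → Prop) (x : ℕ) : Prop :=
  x ∈ X ∧ ∀ y ∈ X, y ≠ x → r x y

/-- `P'` is obtained from `P` by adding one new voter `j` whose ballot ranks `x` in
first place. -/
def AddVoter (P P' : Profile) (j x : ℕ) : Prop :=
  P'.cands = P.cands ∧ j ∉ P.voters ∧ P'.voters = insert j P.voters ∧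
  (∀ i ∈ P.voters, ∀ a b, (P'.ballot i a b ↔ P.ballot i a b)) ∧
  RanksFirst P.cands (P'.ballot j) x

/-- `F` satisfies positive involvement (PI). -/
def SatisfiesPI (F : Profile → Finset ℕ) : Prop :=
  ∀ (P P' : Profile) (j x : ℕ), x ∈ F P → AddVoter P P' j x → x ∈ F P'

/-- The number of voters of `P` who rank `x` first among the candidates in `Y`. -/
noncomputable def countFirst (P : Profile) (Y : Finset ℕ) (x : ℕ) : ℕ :=
  (P.voters.filter (fun i => ∀ y ∈ Y, y ≠ x → P.ballot i x y)).card

/-- `x` is a majority winner in the profile `P` restricted to the candidates in `Y`. -/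
noncomputable def majWinner (P : Profile) (Y : Finset ℕ) (x : ℕ) : Prop :=
  x ∈ Y ∧ 2 * countFirst P Y x > P.voters.card

/-- The number of voters of `P` who rank `x` last among the candidates in `Y`. -/
noncomputable def countLast (P : Profile) (Y : Finset ℕ) (x : ℕ) : ℕ :=
  (P.voters.filter (fun i => ∀ y ∈ Y, y ≠ x → P.ballot i y x)).card

/-- The `n`-th stage of the Coombs elimination process: if some remaining candidate is a
majority winner, stop; otherwise remove all remaining candidates with the most last-place
votes, unless all remaining candidates are tied (in which case stop). -/
noncomputable def coombsStage (P : Profile) : ℕ → Finset ℕ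
  | 0 => P.cands
  | n + 1 =>
    let Y := coombsStage P n
    if (∃ x, majWinner P Y x) then Y
    else
      let L := Y.filter (fun x => ∀ y ∈ Y, countLast P Y y ≤ countLast P Y x)
      if L = Y then Y else Y \ L

/-- The Coombs winners: iterate the elimination process (which stabilizes after at most
`|X(P)|` stages); if a remaining candidate is a majority winner, the majority winner
wins; otherwise (all remaining candidates were tied) all remaining candidates win. -/
noncomputable def Coombs (P : Profile) : Finset ℕ :=
  let Y := coombsStage P P.cands.card
  if (∃ x, majWinner P Y x) then Y.filter (fun x => majWinner P Y x) else Y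


def pos' : ℕ → ℕ → ℕ
| 0, 0 => 0 | 0, 1 => 1 | 0, 3 => 2 | 0, 2 => 3
| 1, 2 => 0 | 1, 0 => 1 | 1, 3 => 2 | 1, 1 => 3
| 2, 2 => 0 | 2, 0 => 1 | 2, 3 => 2 | 2, 1 => 3
| 3, 0 => 0 | 3, 3 => 1 | 3, 1 => 2 | 3, 2 => 3
| 4, 1 => 0 | 4, 2 => 1 | 4, 3 => 2 | 4, 0 => 3
| 5, 2 => 0 | 5, 1 => 1 | 5, 0 => 2 | 5, 3 => 3
| 6, 0 => 0 | 6, 3 => 1 | 6, 2 => 2 | 6, 1 => 3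
| _, _ => 0

def Cset : Finset ℕ := {0,1,2,3}

def bal (i x y : ℕ) : Prop := x ∈ Cset ∧ y ∈ Cset ∧ pos' i x < pos' i y

instance bal.dec : ∀ i x y, Decidable (bal i x y) := fun i x y => by
  unfold bal; infer_instance

def V6 : Finset ℕ := {0,1,2,3,4,5}

def cF (V Y : Finset ℕ) (x : ℕ) : ℕ :=
  (V.filter (fun i => ∀ y ∈ Y, y ≠ x → bal i x y)).card
def cL (V Y : Finset ℕ) (x : ℕ) : ℕ :=
  (V.filter (fun i => ∀ y ∈ Y, y ≠ x → bal i y x)).card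

lemma lin_bal : ∀ i ∈ insert 6 V6, IsLinOn Cset (bal i) := by
  have htot : ∀ i ∈ insert 6 V6, ∀ a ∈ Cset, ∀ b ∈ Cset, a ≠ b → bal i a b ∨ bal i b a := by
    decide
  intro i hi
  exact ⟨fun a b h => ⟨h.1, h.2.1⟩,
         fun a h => lt_irrefl _ h.2.2,
         fun a b c h1 h2 => ⟨h1.1, h2.2.1, lt_trans h1.2.2 h2.2.2⟩,
         htot i hi⟩

lemma filt_irrel {α : Type*} (V : Finset α) (p : α → Prop) (h1 h2 : DecidablePred p) :
    @Finset.filter _ p h1 V = @Finset.filter _ p h2 V := by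
  have : h1 = h2 := funext fun x => Subsingleton.elim _ _
  rw [this]

lemma sub6 : ∀ i, i ∈ V6 → i ∈ insert 6 V6 := by decide

noncomputable def Pr : Profile where
  voters := V6
  cands := Cset
  voters_nonempty := ⟨0, by decide⟩
  cands_nonempty := ⟨0, by decide⟩
  ballot := fun i => bal i
  ballot_lin := fun i hi => lin_bal i (sub6 i hi)

noncomputable def Pr' : Profile where
  voters := insert 6 Pr.voters
  cands := Cset
  voters_nonempty := ⟨0, by decide⟩
  cands_nonempty := ⟨0, by decide⟩
  ballot := fun i => bal i
  ballot_lin := fun i hi => lin_bal i hi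

lemma cf6 (Y : Finset ℕ) (x : ℕ) : countFirst Pr Y x = cF V6 Y x := by
  unfold countFirst cF
  exact congrArg Finset.card (filt_irrel _ _ _ _)

lemma cl6 (Y : Finset ℕ) (x : ℕ) : countLast Pr Y x = cL V6 Y x := by
  unfold countLast cL
  exact congrArg Finset.card (filt_irrel _ _ _ _)

lemma cf7 (Y : Finset ℕ) (x : ℕ) : countFirst Pr' Y x = cF (insert 6 V6) Y x := by
  unfold countFirst cF
  exact congrArg Finset.card (filt_irrel _ _ _ _)

lemma cl7 (Y : Finset ℕ) (x : ℕ) : countLast Pr' Y x = cL (insert 6 V6) Y x := by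
  unfold countLast cL
  exact congrArg Finset.card (filt_irrel _ _ _ _)

lemma stage_succ (P : Profile) (n : ℕ) :
    coombsStage P (n+1) =
      (let Y := coombsStage P n
       if (∃ x, majWinner P Y x) then Y
       else
         let L := Y.filter (fun x => ∀ y ∈ Y, countLast P Y y ≤ countLast P Y x)
         if L = Y then Y else Y \ L) := rfl

lemma card6 : Pr.voters.card = 6 := by decide
lemma card7 : Pr'.voters.card = 7 := by decide

lemma no_maj_P_C : ¬ ∃ x, majWinner Pr Cset x := by
  rintro ⟨x, hx, hc⟩
  rw [cf6, card6] at hc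
  have : ∀ x ∈ Cset, ¬ (2 * cF V6 Cset x > 6) := by decide
  exact this x hx hc

lemma L_P_C : Cset.filter (fun x => ∀ y ∈ Cset, countLast Pr Cset y ≤ countLast Pr Cset x)
    = ({1,2} : Finset ℕ) := by
  simp only [cl6]
  rw [Finset.filter_congr_decidable]
  decide

lemma stage1_P : coombsStage Pr 1 = ({0,3} : Finset ℕ) := by
  have h0 : coombsStage Pr 0 = Cset := rfl
  rw [stage_succ, h0]
  simp only [L_P_C]
  rw [if_neg no_maj_P_C, if_neg (by decide)]
  decide

lemma maj_P_03 : ∃ x, majWinner Pr ({0,3} : Finset ℕ) x := by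
  refine ⟨0, by decide, ?_⟩
  rw [cf6, card6]
  decide

lemma stage_P : ∀ n, coombsStage Pr (n+1) = ({0,3} : Finset ℕ)
  | 0 => stage1_P
  | n+1 => by rw [stage_succ, stage_P n, if_pos maj_P_03]

lemma coombs_P : Coombs Pr = ({0} : Finset ℕ) := by
  have hc : Pr.cands.card = 4 := by decide
  unfold Coombs
  rw [hc, stage_P 3, if_pos maj_P_03]
  have : ∀ x, majWinner Pr ({0,3} : Finset ℕ) x ↔ (x ∈ ({0,3} : Finset ℕ) ∧ 2 * cF V6 {0,3} x > 6) := by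
    intro x; rw [majWinner, cf6, card6]
  simp only [this]
  rw [Finset.filter_congr_decidable]
  decide

lemma no_maj_P'_C : ¬ ∃ x, majWinner Pr' Cset x := by
  rintro ⟨x, hx, hc⟩
  rw [cf7, card7] at hc
  have : ∀ x ∈ Cset, ¬ (2 * cF (insert 6 V6) Cset x > 7) := by decide
  exact this x hx hc

lemma L_P'_C : Cset.filter (fun x => ∀ y ∈ Cset, countLast Pr' Cset y ≤ countLast Pr' Cset x)
    = ({1} : Finset ℕ) := by
  simp only [cl7]
  rw [Finset.filter_congr_decidable]
  decide

lemma stage1_P' : coombsStage Pr' 1 = ({0,2,3} : Finset ℕ) := by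
  have h0 : coombsStage Pr' 0 = Cset := rfl
  rw [stage_succ, h0]
  simp only [L_P'_C]
  rw [if_neg no_maj_P'_C, if_neg (by decide)]
  decide

lemma maj_P'_023 : ∃ x, majWinner Pr' ({0,2,3} : Finset ℕ) x := by
  refine ⟨2, by decide, ?_⟩
  rw [cf7, card7]
  decide

lemma stage_P' : ∀ n, coombsStage Pr' (n+1) = ({0,2,3} : Finset ℕ)
  | 0 => stage1_P'
  | n+1 => by rw [stage_succ, stage_P' n, if_pos maj_P'_023]

lemma coombs_P' : Coombs Pr' = ({2} : Finset ℕ) := by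
  have hc : Pr'.cands.card = 4 := by decide
  unfold Coombs
  rw [hc, stage_P' 3, if_pos maj_P'_023]
  have : ∀ x, majWinner Pr' ({0,2,3} : Finset ℕ) x ↔ (x ∈ ({0,2,3} : Finset ℕ) ∧ 2 * cF (insert 6 V6) {0,2,3} x > 7) := by
    intro x; rw [majWinner, cf7, card7]
  simp only [this]
  rw [Finset.filter_congr_decidable]
  decide

theorem coombs_violates_PI :
    ∃ (P P' : Profile) (j x : ℕ),
      x ∈ Coombs P ∧ AddVoter P P' j x ∧ x ∉ Coombs P' := by
  refine ⟨Pr, Pr', 6, 0, ?_, ?_, ?_⟩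
  · rw [coombs_P]; decide
  · refine ⟨rfl, by decide, rfl, fun i _ a b => Iff.rfl, by decide, ?_⟩
    have h : ∀ y ∈ Cset, y ≠ 0 → bal 6 0 y := by decide
    exact h
  · rw [coombs_P']; decide
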